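/- arXiv:2307.02803 — 2 statements merged into one kernel-verified Lean document; each statement's English description precedes it below -/
import Mathlib

section
/- Let d ≥ 1 and p ∈ (1,∞). There exists a constant C = C(d,p) > 0 such that for all vectors A₁, A₂ ∈ ℝ^d: | |A₁|^{(p−2)/2} A₁ − |A₂|^{(p−2)/2} A₂ |² ≤ C ( |A₁|² + |A₂|² )^{(p−2)/2} |A₁ − A₂|² ≤ C² ⟨ |A₁|^{p−2} A₁ − |A₂|^{p−2} A₂, A₁ − A₂ ⟩, where ⟨·,·⟩ denotes the Euclidean inner product (with the convention that |A|^{q} A = 0 when A = 0 for any exponent q). -/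
open Real

-- helper: x^(m-1) * x = x^m
lemma rpow_sub_one_mul {x m : ℝ} (hx : 0 ≤ x) (hm : m ≠ 0) : x ^ (m - 1) * x = x ^ m := by
  rcases eq_or_lt_of_le hx with h | h
  · rw [← h, Real.zero_rpow hm, mul_zero]
  · rw [← Real.rpow_add_one h.ne' (m - 1), sub_add_cancel]

lemma rpow_two' (x : ℝ) : x ^ (2:ℝ) = x ^ 2 := by
  rw [show (2:ℝ) = ((2:ℕ):ℝ) by norm_num, Real.rpow_natCast]

lemma sq_rpow {x s : ℝ} (hx : 0 ≤ x) : (x ^ s) ^ 2 = x ^ (2 * s) := by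
  rw [show 2 * s = s * 2 by ring, Real.rpow_mul hx, rpow_two']

lemma tangent_upper {m a b : ℝ} (hm : 1 ≤ m) (hb : 0 ≤ b) (hba : b ≤ a) :
    a ^ m - b ^ m ≤ m * a ^ (m - 1) * (a - b) := by
  have hm0 : m ≠ 0 := by linarith
  rcases eq_or_lt_of_le (hb.trans hba) with ha | ha
  · have hb0 : b = 0 := le_antisymm (hba.trans_eq ha.symm) hb
    subst hb0
    rw [← ha]
    simp [Real.zero_rpow hm0]
  · have hane : a ≠ 0 := ha.ne'
    have hs : (-1 : ℝ) ≤ b / a - 1 := by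
      have : 0 ≤ b / a := div_nonneg hb ha.le
      linarith
    have hber := one_add_mul_self_le_rpow_one_add hs hm
    rw [show (1 : ℝ) + (b / a - 1) = b / a by ring, Real.div_rpow hb ha.le] at hber
    have hapow : 0 < a ^ m := Real.rpow_pos_of_pos ha m
    have h2 : a ^ m * (1 + m * (b / a - 1)) ≤ b ^ m := by
      have := mul_le_mul_of_nonneg_left hber hapow.le
      rwa [mul_div_cancel₀ _ hapow.ne'] at this
    have hid : a ^ m + m * (a ^ m / a) * (b - a) = a ^ m * (1 + m * (b / a - 1)) := by
      field_simp
    have h3 : a ^ (m - 1) = a ^ m / a := by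
      rw [Real.rpow_sub ha, Real.rpow_one]
    rw [h3]
    linarith [hid ▸ h2]

lemma upper_small {m a b : ℝ} (hm0 : 0 < m) (hm : m ≤ 1) (hb : 0 ≤ b) (hba : b ≤ a) :
    a ^ m - b ^ m ≤ a ^ (m - 1) * (a - b) := by
  have ha : 0 ≤ a := hb.trans hba
  have hA : a ^ (m - 1) * a = a ^ m := rpow_sub_one_mul ha hm0.ne'
  rcases eq_or_lt_of_le hb with hb0 | hb0
  · rw [← hb0, Real.zero_rpow hm0.ne']
    nlinarith [hA]
  · have h1 : a ^ (m - 1) ≤ b ^ (m - 1) :=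
      Real.rpow_le_rpow_of_nonpos hb0 hba (by linarith)
    have h2 : a ^ (m - 1) * b ≤ b ^ m := by
      have := mul_le_mul_of_nonneg_right h1 hb
      rwa [rpow_sub_one_mul hb hm0.ne'] at this
    nlinarith [hA, h2]

lemma lower_big {m a b : ℝ} (hm : 1 ≤ m) (hb : 0 ≤ b) (hba : b ≤ a) :
    a ^ (m - 1) * (a - b) ≤ a ^ m - b ^ m := by
  have ha : 0 ≤ a := hb.trans hba
  have hm0 : m ≠ 0 := by linarith
  have hA : a ^ (m - 1) * a = a ^ m := rpow_sub_one_mul ha hm0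
  have hB : b ^ (m - 1) * b = b ^ m := rpow_sub_one_mul hb hm0
  have h1 : b ^ (m - 1) ≤ a ^ (m - 1) := Real.rpow_le_rpow hb hba (by linarith)
  have h2 : b ^ (m - 1) * b ≤ a ^ (m - 1) * b := mul_le_mul_of_nonneg_right h1 hb
  nlinarith [hA, hB, h2]

lemma lower_small {m a b : ℝ} (hm0 : 0 < m) (hm : m ≤ 1) (hb : 0 ≤ b) (hba : b ≤ a) :
    m * (a ^ (m - 1) * (a - b)) ≤ a ^ m - b ^ m := by
  have ha : 0 ≤ a := hb.trans hba
  rcases eq_or_lt_of_le ha with ha0 | ha0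
  · have hb0 : b = 0 := le_antisymm (hba.trans_eq ha0.symm) hb
    subst hb0
    rw [← ha0]
    simp [Real.zero_rpow hm0.ne']
  · have h1m : 1 ≤ 1 / m := (le_div_iff₀ hm0).mpr (by linarith)
    have hbm : b ^ m ≤ a ^ m := Real.rpow_le_rpow hb hba hm0.le
    have key := tangent_upper h1m (Real.rpow_nonneg hb m) hbm
    have e1 : (a ^ m) ^ ((1:ℝ) / m) = a := by
      rw [← Real.rpow_mul ha, mul_one_div_cancel hm0.ne', Real.rpow_one]
    have e2 : (b ^ m) ^ ((1:ℝ) / m) = b := by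
      rw [← Real.rpow_mul hb, mul_one_div_cancel hm0.ne', Real.rpow_one]
    have e3 : (a ^ m) ^ ((1:ℝ) / m - 1) = a ^ (1 - m) := by
      rw [← Real.rpow_mul ha]
      congr 1
      field_simp
    rw [e1, e2, e3] at key
    -- key : a - b ≤ 1/m * a^(1-m) * (a^m - b^m)
    have hprod : a ^ (m - 1) * a ^ (1 - m) = 1 := by
      rw [← Real.rpow_add ha0]
      norm_num
    have hpm : 0 ≤ a ^ (m - 1) := Real.rpow_nonneg ha _
    have h4 : (m * a ^ (m - 1)) * (a - b) ≤ (m * a ^ (m - 1)) * (1 / m * a ^ (1 - m) * (a ^ m - b ^ m)) :=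
      mul_le_mul_of_nonneg_left key (by positivity)
    have h5 : (m * a ^ (m - 1)) * (1 / m * a ^ (1 - m) * (a ^ m - b ^ m))
        = (a ^ (m - 1) * a ^ (1 - m)) * (a ^ m - b ^ m) := by
      field_simp
    rw [h5, hprod, one_mul] at h4
    linarith

lemma K1 {p a b : ℝ} (hp : 1 < p) (hb : 0 ≤ b) (hba : b ≤ a) :
    a ^ (p/2) - b ^ (p/2) ≤ p * (a ^ (p/2 - 1) * (a - b)) := by
  have ha : 0 ≤ a := hb.trans hba
  have hpos : 0 ≤ a ^ (p/2 - 1) * (a - b) :=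
    mul_nonneg (Real.rpow_nonneg ha _) (by linarith)
  rcases le_total p 2 with h2 | h2
  · have := upper_small (m := p/2) (by linarith) (by linarith) hb hba
    nlinarith
  · have := tangent_upper (m := p/2) (by linarith) hb hba
    nlinarith

lemma K2 {p a b : ℝ} (hp : 1 < p) (hb : 0 ≤ b) (hba : b ≤ a) :
    min 1 (p-1) * (a ^ (p-2) * (a - b)) ≤ a ^ (p-1) - b ^ (p-1) := by
  have ha : 0 ≤ a := hb.trans hba
  have hpos : 0 ≤ a ^ (p-2) * (a - b) :=
    mul_nonneg (Real.rpow_nonneg ha _) (by linarith)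
  have he : (p:ℝ) - 1 - 1 = p - 2 := by ring
  rcases le_total p 2 with h2 | h2
  · have := lower_small (m := p-1) (by linarith) (by linarith) hb hba
    rw [he] at this
    have hμ : min 1 (p-1) ≤ p - 1 := min_le_right _ _
    nlinarith
  · have := lower_big (m := p-1) (by linarith) hb hba
    rw [he] at this
    have hμ : min 1 (p-1) ≤ 1 := min_le_left _ _
    nlinarith

lemma GB1 {p a b : ℝ} (hp : 1 < p) (hb : 0 ≤ b) (hba : b ≤ a) :
    a ^ (p-2) ≤ 2 * (a^2 + b^2) ^ ((p-2)/2) := by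
  have ha : 0 ≤ a := hb.trans hba
  set s := (p-2)/2 with hs
  have hsq : (a^2 : ℝ) ^ s = a ^ (p-2) := by
    rw [show (a^2 : ℝ) = a ^ (2:ℝ) by rw [rpow_two'], ← Real.rpow_mul ha]
    norm_num [hs]
    ring_nf
  rcases le_total 0 s with hs0 | hs0
  · have h1 : (a^2 : ℝ) ^ s ≤ (a^2 + b^2) ^ s :=
      Real.rpow_le_rpow (by positivity) (by nlinarith) hs0
    have h2 : (0:ℝ) ≤ (a^2 + b^2) ^ s := Real.rpow_nonneg (by positivity) _
    rw [← hsq]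
    linarith
  · rcases eq_or_lt_of_le ha with ha0 | ha0
    · have hb0 : b = 0 := le_antisymm (hba.trans_eq ha0.symm) hb
      subst hb0
      rw [← ha0]
      rcases eq_or_lt_of_le hs0 with hseq | hslt
      · have hp2 : p - 2 = 0 := by rw [hs] at hseq; linarith
        rw [hp2, hseq]
        norm_num [Real.rpow_zero]
      · have hp2 : p - 2 < 0 := by rw [hs] at hslt; linarith
        rw [show ((0:ℝ)^2 + (0:ℝ)^2) = 0 by norm_num]
        rw [Real.zero_rpow hp2.ne, Real.zero_rpow hslt.ne]
        norm_num
    · have hsle : s ≤ 0 := hs0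
      have h1 : ((2:ℝ) * a^2) ^ s ≤ (a^2 + b^2) ^ s :=
        Real.rpow_le_rpow_of_nonpos (by positivity) (by nlinarith) hsle
      have h2 : ((2:ℝ) * a^2) ^ s = 2 ^ s * (a^2) ^ s :=
        Real.mul_rpow (by norm_num) (by positivity)
      have h3 : (1:ℝ)/2 ≤ 2 ^ s := by
        have hge : (-1:ℝ) ≤ s := by rw [hs]; linarith
        have := Real.rpow_le_rpow_of_exponent_le (one_le_two) hge
        rw [Real.rpow_neg_one] at this
        linarith
      have h4 : (0:ℝ) ≤ (a^2) ^ s := Real.rpow_nonneg (by positivity) _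
      rw [← hsq]
      nlinarith

lemma GB2 {p a b : ℝ} (hp : 1 < p) (hb : 0 ≤ b) (hba : b ≤ a) :
    (a^2 + b^2) ^ ((p-2)/2) ≤ 2 ^ p * a ^ (p-2) := by
  have ha : 0 ≤ a := hb.trans hba
  set s := (p-2)/2 with hs
  have hsq : (a^2 : ℝ) ^ s = a ^ (p-2) := by
    rw [show (a^2 : ℝ) = a ^ (2:ℝ) by rw [rpow_two'], ← Real.rpow_mul ha]
    norm_num [hs]
    ring_nf
  have h2p1 : (1:ℝ) ≤ 2 ^ p := by
    have := Real.rpow_le_rpow_of_exponent_le (one_le_two) (show (0:ℝ) ≤ p by linarith)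
    rwa [Real.rpow_zero] at this
  rcases le_total 0 s with hs0 | hs0
  · have h1 : (a^2 + b^2 : ℝ) ^ s ≤ ((2:ℝ) * a^2) ^ s :=
      Real.rpow_le_rpow (by positivity) (by nlinarith) hs0
    have h2 : ((2:ℝ) * a^2) ^ s = 2 ^ s * (a^2) ^ s :=
      Real.mul_rpow (by norm_num) (by positivity)
    have h3 : (2:ℝ) ^ s ≤ 2 ^ p :=
      Real.rpow_le_rpow_of_exponent_le one_le_two (by rw [hs]; linarith)
    have h4 : (0:ℝ) ≤ (a^2) ^ s := Real.rpow_nonneg (by positivity) _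
    rw [← hsq]
    nlinarith
  · rcases eq_or_lt_of_le ha with ha0 | ha0
    · have hb0 : b = 0 := le_antisymm (hba.trans_eq ha0.symm) hb
      subst hb0
      rw [← ha0]
      rcases eq_or_lt_of_le hs0 with hseq | hslt
      · have hp2 : p - 2 = 0 := by rw [hs] at hseq; linarith
        rw [hp2, hseq]
        norm_num [Real.rpow_zero]
        linarith
      · have hp2 : p - 2 < 0 := by rw [hs] at hslt; linarith
        rw [show ((0:ℝ)^2 + (0:ℝ)^2) = 0 by norm_num]
        rw [Real.zero_rpow hp2.ne, Real.zero_rpow hslt.ne]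
        norm_num
    · have h1 : (a^2 + b^2 : ℝ) ^ s ≤ ((a:ℝ)^2) ^ s :=
        Real.rpow_le_rpow_of_nonpos (by positivity) (by nlinarith) hs0
      have h4 : (0:ℝ) ≤ (a^2) ^ s := Real.rpow_nonneg (by positivity) _
      rw [← hsq]
      nlinarith

lemma affine_nonneg {α β t u : ℝ} (h1 : 0 ≤ α + β * u) (h2 : 0 ≤ α - β * u)
    (ht : |t| ≤ u) : 0 ≤ α + β * t := by
  rcases le_total 0 β with hβ | hβ
  · have h3 : β * (-u) ≤ β * t := mul_le_mul_of_nonneg_left (neg_le_of_abs_le ht) hβ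
    nlinarith
  · have h3 : β * u ≤ β * t := mul_le_mul_of_nonpos_left (le_of_abs_le ht) hβ
    nlinarith

lemma div_step {μ K X Q C : ℝ} (hμ : 0 < μ) (hK : 0 < K) (hX : 0 ≤ X)
    (h : μ * X ≤ K * Q) (hC : K / μ ≤ C) : X ≤ C * Q := by
  have hQ : 0 ≤ Q := by nlinarith
  have hKC : K ≤ C * μ := (div_le_iff₀ hμ).mp hC
  nlinarith [mul_le_mul_of_nonneg_right hKC hQ]

set_option maxHeartbeats 1600000 in
lemma scalar_ordered {p a b t C : ℝ} (hp : 1 < p) (hb : 0 ≤ b) (hba : b ≤ a)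
    (ht : |t| ≤ a * b) (hC : C = max (8*p^2) (4 * 2^p / min 1 (p-1))) :
    ((a^((p-2)/2)*a)^2 - 2*(a^((p-2)/2)*b^((p-2)/2))*t + (b^((p-2)/2)*b)^2 ≤
       C * ((a^2+b^2)^((p-2)/2) * (a^2 - 2*t + b^2)) ∧
     (a^2+b^2)^((p-2)/2) * (a^2 - 2*t + b^2) ≤
       C * ((a^((p-2)/2))^2*a^2 - ((a^((p-2)/2))^2+(b^((p-2)/2))^2)*t + (b^((p-2)/2))^2*b^2)) := by
  have ha : 0 ≤ a := hb.trans hba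
  set s : ℝ := (p-2)/2 with hs
  set μ : ℝ := min 1 (p-1) with hmudef
  have hμ : 0 < μ := lt_min one_pos (by linarith)
  have hμ1 : μ ≤ 1 := min_le_left _ _
  have h2p : (0:ℝ) < 2 ^ p := Real.rpow_pos_of_pos two_pos p
  have hC1 : 8*p^2 ≤ C := hC ▸ le_max_left _ _
  have hC2 : 4 * 2^p / μ ≤ C := hC ▸ le_max_right _ _
  -- conversions
  have cva1 : a^s*a = a^(p/2) := by
    rw [hs, show (p-2)/2 = p/2 - 1 by ring]
    exact rpow_sub_one_mul ha (by intro h; nlinarith)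
  have cvb1 : b^s*b = b^(p/2) := by
    rw [hs, show (p-2)/2 = p/2 - 1 by ring]
    exact rpow_sub_one_mul hb (by intro h; nlinarith)
  have cva2 : (a^s)^2 = a^(p-2) := by
    rw [sq_rpow ha, hs]; congr 1; ring
  have cvb2 : (b^s)^2 = b^(p-2) := by
    rw [sq_rpow hb, hs]; congr 1; ring
  have cva3 : (a^s)^2*a = a^(p-1) := by
    rw [cva2, show p-2 = (p-1)-1 by ring]
    exact rpow_sub_one_mul ha (by intro h; nlinarith)
  have cvb3 : (b^s)^2*b = b^(p-1) := by
    rw [cvb2, show p-2 = (p-1)-1 by ring]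
    exact rpow_sub_one_mul hb (by intro h; nlinarith)
  have hG : (0:ℝ) ≤ (a^2+b^2)^s := Real.rpow_nonneg (by positivity) _
  have hGB1 := GB1 hp hb hba
  have hGB2 := GB2 hp hb hba
  rw [← hs] at hGB1 hGB2
  -- endpoint 1 plus
  have hE1p : (a^s*a - b^s*b)^2 ≤ C * ((a^2+b^2)^s * (a-b)^2) := by
    rw [cva1, cvb1]
    have hK1 := K1 hp hb hba
    have hx : 0 ≤ a^(p/2) - b^(p/2) :=
      sub_nonneg.mpr (Real.rpow_le_rpow hb hba (by linarith))
    have h1 : (a^(p/2)-b^(p/2))^2 ≤ (p*(a^(p/2-1)*(a-b)))^2 := by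
      have := pow_le_pow_left₀ hx hK1 2
      simpa using this
    have h2 : (a^(p/2-1))^2 = a^(p-2) := by
      rw [sq_rpow ha]; congr 1; ring
    have h4 : (p*(a^(p/2-1)*(a-b)))^2 = p^2 * ((a^(p/2-1))^2 * (a-b)^2) := by ring
    rw [h4, h2] at h1
    have h5 : a^(p-2)*(a-b)^2 ≤ 2*((a^2+b^2)^s)*(a-b)^2 := by
      linarith [mul_le_mul_of_nonneg_right hGB1 (sq_nonneg (a-b))]
    have h6 : p^2*(a^(p-2)*(a-b)^2) ≤ p^2*(2*((a^2+b^2)^s)*(a-b)^2) :=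
      mul_le_mul_of_nonneg_left h5 (sq_nonneg p)
    have h7 : (8*p^2)*((a^2+b^2)^s*(a-b)^2) ≤ C*((a^2+b^2)^s*(a-b)^2) :=
      mul_le_mul_of_nonneg_right hC1 (mul_nonneg hG (sq_nonneg (a-b)))
    have hnn : (0:ℝ) ≤ p^2*((a^2+b^2)^s*(a-b)^2) :=
      mul_nonneg (sq_nonneg p) (mul_nonneg hG (sq_nonneg (a-b)))
    linarith
  -- endpoint 1 minus
  have hE1m : (a^s*a + b^s*b)^2 ≤ C * ((a^2+b^2)^s * (a+b)^2) := by
    rw [cva1, cvb1]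
    have hbm : b^(p/2) ≤ a^(p/2) := Real.rpow_le_rpow hb hba (by linarith)
    have hbn : (0:ℝ) ≤ b^(p/2) := Real.rpow_nonneg hb _
    have han : (0:ℝ) ≤ a^(p/2) := Real.rpow_nonneg ha _
    have h5 : (a^(p/2)+b^(p/2))^2 ≤ 4*(a^(p/2))^2 := by
      nlinarith [mul_nonneg (sub_nonneg.mpr hbm) hbn, mul_nonneg (sub_nonneg.mpr hbm) han]
    have e1 : a^(p-2)*a = a^(p-1) := by
      rw [show p-2 = (p-1)-1 by ring]; exact rpow_sub_one_mul ha (by intro h; nlinarith)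
    have e2 : a^(p-1)*a = a^p := rpow_sub_one_mul ha (by intro h; nlinarith)
    have e3 : (a^(p/2))^2 = a^p := by rw [sq_rpow ha]; congr 1; ring
    have e4 : a^(p-2)*a^2 = (a^(p/2))^2 := by rw [e3, sq a, ← mul_assoc, e1, e2]
    have h6 : a^(p-2)*a^2 ≤ 2*((a^2+b^2)^s)*a^2 := by
      linarith [mul_le_mul_of_nonneg_right hGB1 (sq_nonneg a)]
    have h7 : (a^2+b^2)^s*a^2 ≤ (a^2+b^2)^s*(a+b)^2 := by
      apply mul_le_mul_of_nonneg_left _ hG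
      nlinarith [mul_nonneg ha hb, sq_nonneg b]
    have h8 : (8:ℝ) ≤ C := by nlinarith [sq_nonneg (p-1)]
    have h9 : 8*((a^2+b^2)^s*(a+b)^2) ≤ C*((a^2+b^2)^s*(a+b)^2) :=
      mul_le_mul_of_nonneg_right h8 (mul_nonneg hG (sq_nonneg (a+b)))
    linarith
  -- endpoint 2 plus
  have hE2p : (a^2+b^2)^s*(a-b)^2 ≤ C*(((a^s)^2*a - (b^s)^2*b)*(a-b)) := by
    rw [cva3, cvb3]
    refine div_step hμ (by positivity) (mul_nonneg hG (sq_nonneg (a-b))) ?_ hC2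
    have hK2 := K2 hp hb hba
    rw [← hmudef] at hK2
    have hD : (0:ℝ) ≤ a^(p-1) - b^(p-1) :=
      sub_nonneg.mpr (Real.rpow_le_rpow hb hba (by linarith))
    have h1 : μ*((a^2+b^2)^s*(a-b)^2) ≤ μ*(2^p*a^(p-2)*(a-b)^2) := by
      apply mul_le_mul_of_nonneg_left _ hμ.le
      linarith [mul_le_mul_of_nonneg_right hGB2 (sq_nonneg (a-b))]
    have h2 : (2^p*(a-b))*(μ*(a^(p-2)*(a-b))) ≤ (2^p*(a-b))*(a^(p-1)-b^(p-1)) :=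
      mul_le_mul_of_nonneg_left hK2 (mul_nonneg h2p.le (sub_nonneg.mpr hba))
    have hnn : (0:ℝ) ≤ 2^p*(a^(p-1)-b^(p-1))*(a-b) :=
      mul_nonneg (mul_nonneg h2p.le hD) (sub_nonneg.mpr hba)
    linarith
  -- endpoint 2 minus
  have hE2m : (a^2+b^2)^s*(a+b)^2 ≤ C*(((a^s)^2*a + (b^s)^2*b)*(a+b)) := by
    rw [cva3, cvb3]
    refine div_step hμ (by positivity) (mul_nonneg hG (sq_nonneg (a+b))) ?_ hC2
    have hSa : (0:ℝ) ≤ a^(p-1) := Real.rpow_nonneg ha _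
    have hSb : (0:ℝ) ≤ b^(p-1) := Real.rpow_nonneg hb _
    have e1 : a^(p-2)*a = a^(p-1) := by
      rw [show p-2 = (p-1)-1 by ring]; exact rpow_sub_one_mul ha (by intro h; nlinarith)
    have h1 : μ*((a^2+b^2)^s*(a+b)^2) ≤ (a^2+b^2)^s*(a+b)^2 := by
      have := mul_le_mul_of_nonneg_right hμ1 (mul_nonneg hG (sq_nonneg (a+b)))
      linarith
    have h2 : (a^2+b^2)^s*(a+b)^2 ≤ 2^p*a^(p-2)*(a+b)^2 := by
      linarith [mul_le_mul_of_nonneg_right hGB2 (sq_nonneg (a+b))]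
    have h3 : (a+b)^2 ≤ 4*a^2 := by
      nlinarith [mul_nonneg (sub_nonneg.mpr hba) hb, mul_nonneg (sub_nonneg.mpr hba) ha]
    have h4 : 2^p*a^(p-2)*(a+b)^2 ≤ 2^p*a^(p-2)*(4*a^2) := by
      apply mul_le_mul_of_nonneg_left h3
      exact mul_nonneg h2p.le (Real.rpow_nonneg ha _)
    have h5 : 2^p*a^(p-2)*(4*a^2) = 4*2^p*(a^(p-1)*a) := by
      rw [← e1]; ring
    have h6 : a^(p-1)*a ≤ (a^(p-1)+b^(p-1))*(a+b) := by
      nlinarith [mul_nonneg hSa hb, mul_nonneg hSb ha, mul_nonneg hSb hb]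
    have h7 : 4*2^p*(a^(p-1)*a) ≤ 4*2^p*((a^(p-1)+b^(p-1))*(a+b)) := by
      apply mul_le_mul_of_nonneg_left h6 (by positivity)
    linarith
  constructor
  · have key1 := affine_nonneg
      (α := C*((a^2+b^2)^s*(a^2+b^2)) - (a^s*a)^2 - (b^s*b)^2)
      (β := 2*(a^s*b^s) - 2*C*((a^2+b^2)^s)) (t := t) (u := a*b)
      (by nlinarith [hE1p]) (by nlinarith [hE1m]) ht
    nlinarith [key1]
  · have key2 := affine_nonneg
      (α := C*((a^s)^2*a^2 + (b^s)^2*b^2) - (a^2+b^2)^s*(a^2+b^2))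
      (β := 2*((a^2+b^2)^s) - C*((a^s)^2+(b^s)^2)) (t := t) (u := a*b)
      (by nlinarith [hE2p]) (by nlinarith [hE2m]) ht
    nlinarith [key2]

lemma scalar_main {p : ℝ} (hp : 1 < p) :
    ∃ C > (0:ℝ), ∀ a b t : ℝ, 0 ≤ a → 0 ≤ b → |t| ≤ a*b →
    ((a^((p-2)/2)*a)^2 - 2*(a^((p-2)/2)*b^((p-2)/2))*t + (b^((p-2)/2)*b)^2 ≤
       C * ((a^2+b^2)^((p-2)/2) * (a^2 - 2*t + b^2)) ∧
     (a^2+b^2)^((p-2)/2) * (a^2 - 2*t + b^2) ≤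
       C * ((a^((p-2)/2))^2*a^2 - ((a^((p-2)/2))^2+(b^((p-2)/2))^2)*t + (b^((p-2)/2))^2*b^2)) := by
  refine ⟨max (8*p^2) (4 * 2^p / min 1 (p-1)), ?_, ?_⟩
  · have h8 : (0:ℝ) < 8*p^2 := by nlinarith
    exact lt_of_lt_of_le h8 (le_max_left _ _)
  · intro a b t ha hb ht
    rcases le_total b a with hab | hab
    · exact scalar_ordered hp hb hab ht rfl
    · have ht' : |t| ≤ b*a := by rwa [mul_comm]
      obtain ⟨h1, h2⟩ := scalar_ordered hp ha hab ht' rfl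
      rw [add_comm (b^2) (a^2)] at h1 h2
      exact ⟨by linarith, by linarith⟩

open scoped RealInnerProductSpace

noncomputable section

/-- Euclidean space ℝ^d. -/
abbrev Ed (d : ℕ) := EuclideanSpace ℝ (Fin d)

theorem vector_inequality_monotone
    (d : ℕ) (hd : 1 ≤ d) (p : ℝ) (hp : 1 < p) :
    ∃ C > (0 : ℝ), ∀ A₁ A₂ : Ed d,
      ‖(‖A₁‖ ^ ((p - 2) / 2)) • A₁ - (‖A₂‖ ^ ((p - 2) / 2)) • A₂‖ ^ (2 : ℝ) ≤
        C * ((‖A₁‖ ^ (2 : ℝ) + ‖A₂‖ ^ (2 : ℝ)) ^ ((p - 2) / 2) * ‖A₁ - A₂‖ ^ (2 : ℝ)) ∧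
      C * ((‖A₁‖ ^ (2 : ℝ) + ‖A₂‖ ^ (2 : ℝ)) ^ ((p - 2) / 2) * ‖A₁ - A₂‖ ^ (2 : ℝ)) ≤
        C ^ 2 * ⟪(‖A₁‖ ^ (p - 2)) • A₁ - (‖A₂‖ ^ (p - 2)) • A₂, A₁ - A₂⟫ := by
  obtain ⟨C, hC0, hmain⟩ := scalar_main hp
  refine ⟨C, hC0, fun A₁ A₂ => ?_⟩
  have key := hmain ‖A₁‖ ‖A₂‖ ⟪A₁, A₂⟫ (norm_nonneg _) (norm_nonneg _)
    (abs_real_inner_le_norm A₁ A₂)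
  have hna : (0:ℝ) ≤ ‖A₁‖ ^ ((p-2)/2) := Real.rpow_nonneg (norm_nonneg _) _
  have hnb : (0:ℝ) ≤ ‖A₂‖ ^ ((p-2)/2) := Real.rpow_nonneg (norm_nonneg _) _
  have hL : ‖(‖A₁‖ ^ ((p - 2) / 2)) • A₁ - (‖A₂‖ ^ ((p - 2) / 2)) • A₂‖ ^ (2 : ℝ) =
      (‖A₁‖^((p-2)/2)*‖A₁‖)^2 - 2*(‖A₁‖^((p-2)/2)*‖A₂‖^((p-2)/2))*⟪A₁,A₂⟫ +
        (‖A₂‖^((p-2)/2)*‖A₂‖)^2 := by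
    rw [rpow_two', norm_sub_sq_real, norm_smul, norm_smul,
      real_inner_smul_left, real_inner_smul_right, Real.norm_eq_abs, Real.norm_eq_abs,
      abs_of_nonneg hna, abs_of_nonneg hnb]
    ring
  have hM : ‖A₁ - A₂‖ ^ (2:ℝ) = ‖A₁‖^2 - 2*⟪A₁,A₂⟫ + ‖A₂‖^2 := by
    rw [rpow_two', norm_sub_sq_real]
  have hB : ‖A₁‖ ^ (2:ℝ) + ‖A₂‖ ^ (2:ℝ) = ‖A₁‖^2 + ‖A₂‖^2 := by
    rw [rpow_two', rpow_two']
  have ca : ‖A₁‖^(p-2) = (‖A₁‖^((p-2)/2))^2 := by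
    rw [sq_rpow (norm_nonneg _)]; congr 1; ring
  have cb : ‖A₂‖^(p-2) = (‖A₂‖^((p-2)/2))^2 := by
    rw [sq_rpow (norm_nonneg _)]; congr 1; ring
  have hR : ⟪(‖A₁‖ ^ (p - 2)) • A₁ - (‖A₂‖ ^ (p - 2)) • A₂, A₁ - A₂⟫ =
      (‖A₁‖^((p-2)/2))^2*‖A₁‖^2 - ((‖A₁‖^((p-2)/2))^2+(‖A₂‖^((p-2)/2))^2)*⟪A₁,A₂⟫ +
        (‖A₂‖^((p-2)/2))^2*‖A₂‖^2 := by
    rw [inner_sub_left, inner_sub_right, inner_sub_right,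
      real_inner_smul_left, real_inner_smul_left, real_inner_smul_left, real_inner_smul_left,
      real_inner_self_eq_norm_sq, real_inner_self_eq_norm_sq, real_inner_comm A₂ A₁, ca, cb]
    ring
  rw [hL, hM, hB, hR]
  constructor
  · exact key.1
  · have h2 := mul_le_mul_of_nonneg_left key.2 hC0.le
    nlinarith [h2]

end
end

section
/- Let Ω ⊂ ℝ^d be a bounded open set and let A(s) = (1+s) log(1+s) − s for s ≥ 0. Define the Luxemburg norm ‖f‖_{L_A(Ω)} := inf { t > 0 : ∫_Ω A(|f(x)|/t) dx ≤ 1 } and the quantity |f|_{L log L(Ω)} := ∫_Ω |f| log( e + |f| / ∫_Ω |f| dx ) dx. Then there exist constants k₁, k₂ > 0 such that for every f ∈ L¹_loc(Ω) with these quantities finite, k₁ ‖f‖_{L_A(Ω)} ≤ |f|_{L log L(Ω)} ≤ k₂ ‖f‖_{L_A(Ω)}. -/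
open MeasureTheory
open scoped ENNReal Topology

noncomputable section

/-- The N-function A(s) = (1+s) log(1+s) − s. -/
def Afun (t : ℝ) : ℝ := (1 + t) * Real.log (1 + t) - t

/-- The set of admissible constants in the Luxemburg norm of f over Ω. -/
def luxSet (d : ℕ) (Ω : Set (Ed d)) (f : Ed d → ℝ) : Set ℝ :=
  {t : ℝ | 0 < t ∧ (∫ x in Ω, Afun (|f x| / t)) ≤ 1}

/-- The Luxemburg norm ‖f‖_{L_A(Ω)}. -/
def luxNorm (d : ℕ) (Ω : Set (Ed d)) (f : Ed d → ℝ) : ℝ := sInf (luxSet d Ω f)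

/-- The quantity |f|_{L log L(Ω)} = ∫_Ω |f| log(e + |f| / ∫_Ω |f|). -/
def llogl (d : ℕ) (Ω : Set (Ed d)) (f : Ed d → ℝ) : ℝ :=
  ∫ x in Ω, |f x| * Real.log (Real.exp 1 + |f x| / ∫ y in Ω, |f y|)

/-! Since `A(s) ≤ s log (1 + s)` and `|f|_{L log L} ≥ ∫ |f|`, the value `t = |f|_{L log L}` is
admissible in the Luxemburg infimum, so `k₁ = 1` works. Conversely, for admissible `t` put
`s = |f| / t` and `J = ∫ s`. The pointwise bound `s log (e + s / J) ≤ A(s) + 2 s + s / J`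
integrates to `|f|_{L log L} ≤ t (∫ A(s) + 2 J + 1)`, and `s ≤ A(s) + 1` gives
`J ≤ ∫ A(s) + |Ω|`; with `∫ A(s) ≤ 1` this yields `k₂ = 4 + 2 |Ω|`. -/

open Real

section Pointwise

variable {s : ℝ}

lemma Afun_zero : Afun 0 = 0 := by simp [Afun]

lemma measurable_Afun : Measurable Afun := by
  unfold Afun; fun_prop

lemma Afun_nonneg (hs : 0 ≤ s) : 0 ≤ Afun s := by
  have hpos : 0 < 1 + s := by linarith
  have hlog := one_sub_inv_le_log_of_pos hpos
  have hmul := mul_le_mul_of_nonneg_left hlog hpos.le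
  rw [mul_sub, mul_inv_cancel₀ hpos.ne'] at hmul
  unfold Afun
  linarith

lemma Afun_le_mul_log (hs : 0 ≤ s) : Afun s ≤ s * log (1 + s) := by
  have := log_le_sub_one_of_pos (by linarith : 0 < 1 + s)
  unfold Afun
  linarith

/-- From the Young inequality `y log y ≥ 2 y - e` at `y = 1 + s`, and `e < 3`. -/
lemma le_Afun_add_one (hs : 0 ≤ s) : s ≤ Afun s + 1 := by
  have hpos : 0 < 1 + s := by linarith
  have hlog := one_sub_inv_le_log_of_pos (div_pos hpos (exp_pos 1))
  rw [log_div hpos.ne' (exp_pos 1).ne', log_exp, inv_div] at hlog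
  have hmul := mul_le_mul_of_nonneg_left hlog hpos.le
  rw [mul_sub, mul_div_cancel₀ _ hpos.ne'] at hmul
  have he : exp 1 < 3 := lt_trans exp_one_lt_d9 (by norm_num)
  unfold Afun
  nlinarith

lemma mul_log_exp_add_div_le (hs : 0 ≤ s) {J : ℝ} (hJ : 0 < J) :
    s * log (exp 1 + s / J) ≤ Afun s + 2 * s + s / J := by
  have hJ' : 0 < 1 / J := by positivity
  have hprod : exp 1 + s / J ≤ exp 1 * ((1 + s) * (1 + 1 / J)) := by
    have : 1 ≤ exp 1 := by linarith [add_one_le_exp 1]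
    have : s / J = s * (1 / J) := by ring
    nlinarith [mul_nonneg hs hJ'.le]
  have hlog : log (exp 1 + s / J) ≤ 1 + log (1 + s) + 1 / J := by
    calc log (exp 1 + s / J) ≤ log (exp 1 * ((1 + s) * (1 + 1 / J))) :=
          log_le_log (by positivity) hprod
      _ = 1 + log (1 + s) + log (1 + 1 / J) := by
          rw [log_mul (by positivity) (by positivity), log_mul (by positivity) (by positivity),
            log_exp, add_assoc]
      _ ≤ 1 + log (1 + s) + 1 / J := by
          linarith [log_le_sub_one_of_pos (by positivity : 0 < 1 + 1 / J)]
  have hlog0 : 0 ≤ log (1 + s) := log_nonneg (by linarith)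
  calc s * log (exp 1 + s / J) ≤ s * (1 + log (1 + s) + 1 / J) :=
        mul_le_mul_of_nonneg_left hlog hs
    _ ≤ Afun s + 2 * s + s / J := by
        unfold Afun
        have : s * (1 / J) = s / J := by ring
        nlinarith

lemma log_one_add_le_log_one_add_add_log (hs : 0 ≤ s) {J : ℝ} (hJ : 0 < J) :
    log (1 + s) ≤ log (1 + J) + log (exp 1 + s / J) := by
  have hprod : 1 + s ≤ (1 + J) * (exp 1 + s / J) := by
    have : 1 ≤ exp 1 := by linarith [add_one_le_exp 1]
    have : J * (s / J) = s := mul_div_cancel₀ s hJ.ne'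
    nlinarith [div_nonneg hs hJ.le]
  rw [← log_mul (by positivity) (by positivity)]
  exact log_le_log (by positivity) hprod

end Pointwise

section Integral

variable {α : Type*} [MeasurableSpace α] {μ : Measure α} {f : α → ℝ} {t : ℝ}

/-- `llogl d Ω f` is the integral of `lloglIntegrand (volume.restrict Ω) f` over
`volume.restrict Ω`. -/
def lloglIntegrand (μ : Measure α) (f : α → ℝ) (x : α) : ℝ :=
  |f x| * log (exp 1 + |f x| / ∫ y, |f y| ∂μ)

lemma abs_le_lloglIntegrand (x : α) : |f x| ≤ lloglIntegrand μ f x := by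
  have hI : 0 ≤ ∫ y, |f y| ∂μ := integral_nonneg fun _ => abs_nonneg _
  have hlog : 1 ≤ log (exp 1 + |f x| / ∫ y, |f y| ∂μ) := by
    rw [le_log_iff_exp_le (by positivity)]
    linarith [div_nonneg (abs_nonneg (f x)) hI]
  exact le_mul_of_one_le_right (abs_nonneg _) hlog

lemma lloglIntegrand_of_integral_abs_eq_zero (hI : ∫ y, |f y| ∂μ = 0) :
    lloglIntegrand μ f = fun x => |f x| := by
  ext x
  simp [lloglIntegrand, hI]

lemma integral_abs_le_integral_lloglIntegrand (hG : Integrable (lloglIntegrand μ f) μ) :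
    ∫ x, |f x| ∂μ ≤ ∫ x, lloglIntegrand μ f x ∂μ :=
  integral_mono_of_nonneg (.of_forall fun _ => abs_nonneg _) hG
    (.of_forall abs_le_lloglIntegrand)

/-- If `∫ |f| = 0` the integrand is `|f|` (division by zero is zero); otherwise the Bochner
integral `∫ |f|` can only be nonzero for integrable `|f|`. -/
lemma integrable_abs_of_integrable_lloglIntegrand (hG : Integrable (lloglIntegrand μ f) μ) :
    Integrable (fun x => |f x|) μ := by
  by_cases hI : ∫ y, |f y| ∂μ = 0
  · rwa [lloglIntegrand_of_integral_abs_eq_zero hI] at hG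
  · exact .of_integral_ne_zero hI

lemma Afun_div_ae_eq_zero_of_integral_abs_eq_zero (hG : Integrable (lloglIntegrand μ f) μ)
    (hI : ∫ y, |f y| ∂μ = 0) (t : ℝ) : (fun x => Afun (|f x| / t)) =ᵐ[μ] 0 := by
  have hf : (fun x => |f x|) =ᵐ[μ] 0 :=
    (integral_eq_zero_iff_of_nonneg (fun _ => abs_nonneg _)
      (integrable_abs_of_integrable_lloglIntegrand hG)).1 hI
  filter_upwards [hf] with x hx
  simp only [Pi.zero_apply] at hx ⊢
  rw [hx, zero_div, Afun_zero]

lemma integral_Afun_div_le_one (hG : Integrable (lloglIntegrand μ f) μ) (ht : 0 < t)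
    (hGt : ∫ x, lloglIntegrand μ f x ∂μ ≤ t) : ∫ x, Afun (|f x| / t) ∂μ ≤ 1 := by
  set I := ∫ y, |f y| ∂μ
  have hI0 : 0 ≤ I := integral_nonneg fun _ => abs_nonneg _
  rcases hI0.eq_or_lt with hIzero | hIpos
  · rw [integral_congr_ae (Afun_div_ae_eq_zero_of_integral_abs_eq_zero hG hIzero.symm t)]
    simp
  have hIt : I ≤ t := (integral_abs_le_integral_lloglIntegrand hG).trans hGt
  have hpt : ∀ x, Afun (|f x| / t) ≤ t⁻¹ * lloglIntegrand μ f x := fun x => by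
    have hlog : log (1 + |f x| / t) ≤ log (exp 1 + |f x| / I) := by
      refine log_le_log (by positivity) (add_le_add (by linarith [add_one_le_exp 1]) ?_)
      exact div_le_div_of_nonneg_left (abs_nonneg _) hIpos hIt
    calc Afun (|f x| / t) ≤ |f x| / t * log (1 + |f x| / t) := Afun_le_mul_log (by positivity)
      _ ≤ |f x| / t * log (exp 1 + |f x| / I) := by gcongr
      _ = t⁻¹ * lloglIntegrand μ f x := by rw [lloglIntegrand, div_eq_inv_mul, mul_assoc]
  calc ∫ x, Afun (|f x| / t) ∂μ ≤ ∫ x, t⁻¹ * lloglIntegrand μ f x ∂μ :=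
        integral_mono_of_nonneg (.of_forall fun _ => Afun_nonneg (by positivity))
          (hG.const_mul _) (.of_forall hpt)
    _ ≤ 1 := by
        rw [integral_const_mul, inv_mul_le_one₀ ht]
        exact hGt

lemma integrable_Afun_div (hG : Integrable (lloglIntegrand μ f) μ) (ht : 0 < t) :
    Integrable (fun x => Afun (|f x| / t)) μ := by
  set I := ∫ y, |f y| ∂μ
  have hI0 : 0 ≤ I := integral_nonneg fun _ => abs_nonneg _
  rcases hI0.eq_or_lt with hIzero | hIpos
  · exact (integrable_zero _ _ _).congr
      (Afun_div_ae_eq_zero_of_integral_abs_eq_zero hG hIzero.symm t).symm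
  have hf := integrable_abs_of_integrable_lloglIntegrand hG
  have hmeas : AEStronglyMeasurable (fun x => Afun (|f x| / t)) μ :=
    (measurable_Afun.comp_aemeasurable (hf.aemeasurable.div_const t)).aestronglyMeasurable
  refine Integrable.mono' ((hf.div_const t |>.mul_const (log (1 + I / t))).add
    (hG.const_mul t⁻¹)) hmeas (.of_forall fun x => ?_)
  have hs : 0 ≤ |f x| / t := by positivity
  have hJ : 0 < I / t := by positivity
  have hlog := log_one_add_le_log_one_add_add_log hs hJ
  rw [div_div_div_cancel_right₀ ht.ne'] at hlog
  rw [Real.norm_of_nonneg (Afun_nonneg hs)]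
  calc Afun (|f x| / t) ≤ |f x| / t * log (1 + |f x| / t) := Afun_le_mul_log hs
    _ ≤ |f x| / t * (log (1 + I / t) + log (exp 1 + |f x| / I)) := by gcongr
    _ = _ := by simp only [Pi.add_apply, lloglIntegrand]; ring

lemma integral_le_integral_Afun_add [IsFiniteMeasure μ] {g : α → ℝ} (hg0 : 0 ≤ g)
    (hg : Integrable g μ) (hA : Integrable (fun x => Afun (g x)) μ) :
    ∫ x, g x ∂μ ≤ ∫ x, Afun (g x) ∂μ + μ.real Set.univ := by
  calc ∫ x, g x ∂μ ≤ ∫ x, (Afun (g x) + 1) ∂μ :=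
        integral_mono hg (hA.add (integrable_const 1)) fun x => le_Afun_add_one (hg0 x)
    _ = ∫ x, Afun (g x) ∂μ + μ.real Set.univ := by
        rw [integral_add hA (integrable_const 1), integral_const, smul_eq_mul, mul_one]

lemma lloglIntegrand_le (hI : 0 < ∫ y, |f y| ∂μ) (ht : 0 < t) (x : α) :
    lloglIntegrand μ f x ≤
      t * Afun (|f x| / t) + 2 * |f x| + t / (∫ y, |f y| ∂μ) * |f x| := by
  have hs : 0 ≤ |f x| / t := by positivity
  have h := mul_le_mul_of_nonneg_left (mul_log_exp_add_div_le hs (div_pos hI ht)) ht.le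
  rw [div_div_div_cancel_right₀ ht.ne'] at h
  calc lloglIntegrand μ f x = t * (|f x| / t * log (exp 1 + |f x| / ∫ y, |f y| ∂μ)) := by
        rw [lloglIntegrand]; field_simp
    _ ≤ _ := h
    _ = _ := by field_simp

lemma integral_lloglIntegrand_le [IsFiniteMeasure μ] (hG : Integrable (lloglIntegrand μ f) μ)
    (ht : 0 < t) (hA : ∫ x, Afun (|f x| / t) ∂μ ≤ 1) :
    ∫ x, lloglIntegrand μ f x ∂μ ≤ (4 + 2 * μ.real Set.univ) * t := by
  set I := ∫ y, |f y| ∂μ with hI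
  set M := μ.real Set.univ
  have hI0 : 0 ≤ I := integral_nonneg fun _ => abs_nonneg _
  rcases hI0.eq_or_lt with hIzero | hIpos
  · rw [lloglIntegrand_of_integral_abs_eq_zero hIzero.symm, ← hI, ← hIzero]
    positivity
  have hf := integrable_abs_of_integrable_lloglIntegrand hG
  have hAi := integrable_Afun_div hG ht
  set X := ∫ x, Afun (|f x| / t) ∂μ
  have hint₁ : Integrable (fun x => t * Afun (|f x| / t) + 2 * |f x|) μ :=
    (hAi.const_mul t).add (hf.const_mul 2)
  have hint₂ : Integrable (fun x => t * Afun (|f x| / t) + 2 * |f x| + t / I * |f x|) μ :=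
    hint₁.add (hf.const_mul _)
  have hbound : ∫ x, lloglIntegrand μ f x ∂μ ≤ t * X + 2 * I + t := by
    calc ∫ x, lloglIntegrand μ f x ∂μ
        ≤ ∫ x, (t * Afun (|f x| / t) + 2 * |f x| + t / I * |f x|) ∂μ :=
          integral_mono hG hint₂ (lloglIntegrand_le hIpos ht)
      _ = t * X + 2 * I + t := by
          rw [integral_add hint₁ (hf.const_mul _),
            integral_add (hAi.const_mul t) (hf.const_mul 2), integral_const_mul,
            integral_const_mul, integral_const_mul, div_mul_cancel₀ t hIpos.ne']
  have hIX : I / t ≤ X + M := by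
    have := integral_le_integral_Afun_add (fun x => by positivity) (hf.div_const t) hAi
    rwa [integral_div] at this
  rw [div_le_iff₀ ht] at hIX
  linarith [mul_le_mul_of_nonneg_left hA ht.le]

end Integral

section Luxemburg

variable {d : ℕ} {Ω : Set (Ed d)} {f : Ed d → ℝ}

lemma luxNorm_le_llogl
    (hG : Integrable (lloglIntegrand (volume.restrict Ω) f) (volume.restrict Ω)) :
    luxNorm d Ω f ≤ llogl d Ω f := by
  have hnonneg : 0 ≤ llogl d Ω f :=
    integral_nonneg fun x => (abs_nonneg _).trans (abs_le_lloglIntegrand x)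
  refine le_of_forall_gt_imp_ge_of_dense fun t ht => csInf_le ⟨0, fun _ h => h.1.le⟩ ?_
  have ht0 : 0 < t := hnonneg.trans_lt ht
  exact ⟨ht0, integral_Afun_div_le_one hG ht0 ht.le⟩

lemma llogl_le_mul_luxNorm [IsFiniteMeasure (volume.restrict Ω)]
    (hG : Integrable (lloglIntegrand (volume.restrict Ω) f) (volume.restrict Ω))
    (hne : (luxSet d Ω f).Nonempty) :
    llogl d Ω f ≤ (4 + 2 * volume.real Ω) * luxNorm d Ω f := by
  rw [← measureReal_restrict_apply_univ, ← div_le_iff₀' (by positivity)]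
  refine le_csInf hne fun t ⟨ht, hA⟩ => ?_
  rw [div_le_iff₀' (by positivity)]
  exact integral_lloglIntegrand_le hG ht hA

end Luxemburg

theorem luxemburg_llogl_equivalence_general
    (d : ℕ) (Ω : Set (Ed d)) (hΩb : Bornology.IsBounded Ω) :
    ∃ k₁ > (0 : ℝ), ∃ k₂ > (0 : ℝ), ∀ f : Ed d → ℝ,
      LocallyIntegrableOn f Ω →
      IntegrableOn
        (fun x => |f x| * Real.log (Real.exp 1 + |f x| / ∫ y in Ω, |f y|)) Ω →
      (luxSet d Ω f).Nonempty →
      k₁ * luxNorm d Ω f ≤ llogl d Ω f ∧ llogl d Ω f ≤ k₂ * luxNorm d Ω f := by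
  have : IsFiniteMeasure (volume.restrict Ω) :=
    isFiniteMeasure_restrict.2 hΩb.measure_lt_top.ne
  refine ⟨1, one_pos, 4 + 2 * volume.real Ω, by positivity, fun f _ hG hne => ⟨?_, ?_⟩⟩
  · rw [one_mul]
    exact luxNorm_le_llogl hG
  · exact llogl_le_mul_luxNorm hG hne

theorem luxemburg_llogl_equivalence
    (d : ℕ) (Ω : Set (Ed d)) (hΩo : IsOpen Ω) (hΩb : Bornology.IsBounded Ω) :
    ∃ k₁ > (0 : ℝ), ∃ k₂ > (0 : ℝ), ∀ f : Ed d → ℝ,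
      LocallyIntegrableOn f Ω →
      IntegrableOn
        (fun x => |f x| * Real.log (Real.exp 1 + |f x| / ∫ y in Ω, |f y|)) Ω →
      (luxSet d Ω f).Nonempty →
      k₁ * luxNorm d Ω f ≤ llogl d Ω f ∧ llogl d Ω f ≤ k₂ * luxNorm d Ω f :=
  luxemburg_llogl_equivalence_general d Ω hΩb
end
end
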